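/- With the resonator coefficients f = f_M as defined, for every ε > 0 one has Σ_{nu ≤ M} f(u) f(nu) (log n)/√n ≪_ε Q₁ (log M)^{1/2+ε} as M → ∞, where Q₁ = Π_p (1 + f(p)² + f(p)/√p). -/

import Mathlib

open Filter Finset
open scoped Classical

/-- `L = √(log M · log log M)` for the resonator parameter `M`. -/
noncomputable def resL (M : ℕ) : ℝ := Real.sqrt (Real.log M * Real.log (Real.log M))

/-- The value of the resonator coefficients at a prime `p`:
`f(p) = L/(√p log p)` if `L² ≤ p ≤ exp((log L)²)`, and `f(p) = 0` otherwise. -/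
noncomputable def resFp (M p : ℕ) : ℝ :=
  if resL M ^ 2 ≤ (p : ℝ) ∧ (p : ℝ) ≤ Real.exp (Real.log (resL M) ^ 2) then
    resL M / (Real.sqrt p * Real.log p)
  else 0

/-- The resonator coefficients `f = f_M`: the multiplicative function supported on squarefree
integers determined by its values `resFp` at primes. -/
noncomputable def resF (M n : ℕ) : ℝ :=
  if Squarefree n then ∏ p ∈ n.primeFactors, resFp M p else 0

/-- `Q₁ = Π_p (1 + f(p)² + f(p)/√p)`. -/
noncomputable def resQ1 (M : ℕ) : ℝ :=
  ∏ᶠ p ∈ {p : ℕ | p.Prime}, (1 + resFp M p ^ 2 + resFp M p / Real.sqrt p)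

/-- `Q₂ = Π_p (1 + f(p)²)`. -/
noncomputable def resQ2 (M : ℕ) : ℝ :=
  ∏ᶠ p ∈ {p : ℕ | p.Prime}, (1 + resFp M p ^ 2)

/-- The multiplicative function `g` supported on squarefree integers with `g(p) = 1 + f(p)²`. -/
noncomputable def resG (M n : ℕ) : ℝ :=
  if Squarefree n then ∏ p ∈ n.primeFactors, (1 + resFp M p ^ 2) else 0

/-! A term is nonzero only when `n` and `u` are coprime squarefree products of primes in the
finite set `P` where `f(p) ≠ 0`, and then `f(u) f(nu) = f(u)² f(n)`. Dropping the constraint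
`nu ≤ M` bounds the sum by a sum over pairs of disjoint subsets `S, T ⊆ P`, which factors as
`∑_{p ∈ P} log p · f(p)/√p · ∏_{q ≠ p} (1 + f(q)² + f(q)/√q) ≤ Q₁ · L ∑_{p ∈ P} 1/p`.
Since `P` lies below `exp((log L)²)`, the last sum is at most `1 + (log L)²`, and
`L (1 + (log L)²) = O((log M)^{1/2 + ε})`. -/

namespace Finset

variable {α R : Type*} [DecidableEq α] [CommSemiring R]

theorem sum_powerset_filter_mem_prod_mul_prod_sdiff (y z : α → R) {P : Finset α} {p : α}
    (hp : p ∈ P) :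
    ∑ S ∈ P.powerset with p ∈ S, (∏ q ∈ S, y q) * ∏ q ∈ P \ S, z q =
      y p * ∏ q ∈ P.erase p, (y q + z q) := by
  have hp' : p ∉ P.erase p := notMem_erase p P
  have hS : ∀ S ∈ (P.erase p).powerset, p ∉ S := fun S hS h => hp' (mem_powerset.1 hS h)
  conv_lhs => rw [sum_filter, ← insert_erase hp, sum_powerset_insert hp']
  rw [sum_eq_zero fun S hS' => if_neg (hS S hS'), zero_add, prod_add, mul_sum]
  refine sum_congr rfl fun S hS' => ?_
  rw [if_pos (mem_insert_self p S), prod_insert (hS S hS'), insert_sdiff_insert,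
    sdiff_insert_of_notMem hp', mul_assoc]

/-- A product rule: the weight `∑ p ∈ S, w p` differentiates `∏ (y + z)` along `y`. -/
theorem sum_powerset_sum_mul_prod_mul_prod_sdiff (w y z : α → R) (P : Finset α) :
    ∑ S ∈ P.powerset, (∑ p ∈ S, w p) * ((∏ q ∈ S, y q) * ∏ q ∈ P \ S, z q) =
      ∑ p ∈ P, w p * y p * ∏ q ∈ P.erase p, (y q + z q) := by
  simp_rw [sum_mul]
  rw [sum_comm' (t' := P) (s' := fun p => {S ∈ P.powerset | p ∈ S})]
  · refine sum_congr rfl fun p hp => ?_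
    rw [← mul_sum, sum_powerset_filter_mem_prod_mul_prod_sdiff y z hp, mul_assoc]
  · intro S p
    simp only [mem_filter, mem_powerset]
    exact ⟨fun h => ⟨⟨h.1, h.2⟩, h.1 h.2⟩, fun h => ⟨h.1.1, h.1.2⟩⟩

end Finset

section SquarefreeProduct

open Real

noncomputable def sqfProd (a : ℕ → ℝ) (n : ℕ) : ℝ :=
  if Squarefree n then ∏ p ∈ n.primeFactors, a p else 0

variable {a : ℕ → ℝ}

theorem sqfProd_nonneg (ha : ∀ p, 0 ≤ a p) (n : ℕ) : 0 ≤ sqfProd a n := by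
  unfold sqfProd
  split_ifs
  exacts [prod_nonneg fun p _ => ha p, le_rfl]

theorem sqfProd_mul_sqfProd_mul_log_div_sqrt_nonneg (ha : ∀ p, 0 ≤ a p) (n u : ℕ) :
    0 ≤ sqfProd a u * sqfProd a (n * u) * log n / √n := by
  have := sqfProd_nonneg ha u
  have := sqfProd_nonneg ha (n * u)
  positivity

theorem squarefree_prod_primes {S : Finset ℕ} (hS : ∀ p ∈ S, p.Prime) :
    Squarefree (∏ p ∈ S, p) :=
  squarefree_prod_of_pairwise_isCoprime (fun p hp q hq hpq =>
      Nat.coprime_iff_isRelPrime.1 <| (Nat.coprime_primes (hS p hp) (hS q hq)).2 hpq)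
    fun p hp => (hS p hp).prime.squarefree

theorem sqfProd_prod_primes {S : Finset ℕ} (hS : ∀ p ∈ S, p.Prime) :
    sqfProd a (∏ p ∈ S, p) = ∏ p ∈ S, a p := by
  rw [sqfProd, if_pos (squarefree_prod_primes hS), Nat.primeFactors_prod hS]

theorem squarefree_and_primeFactors_subset_of_sqfProd_ne_zero {P : Finset ℕ}
    (ha_supp : ∀ p, p.Prime → a p ≠ 0 → p ∈ P) {n : ℕ} (hn : sqfProd a n ≠ 0) :
    Squarefree n ∧ n.primeFactors ⊆ P := by
  by_cases hsq : Squarefree n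
  · refine ⟨hsq, fun p hp => ha_supp p (Nat.prime_of_mem_primeFactors hp) fun h0 => hn ?_⟩
    rw [sqfProd, if_pos hsq]
    exact prod_eq_zero hp h0
  · exact absurd (if_neg hsq) hn

/-- Only squarefree `n` with prime factors in `P` contribute, and these are the products of the
subsets of `P`. -/
theorem sum_le_sum_powerset_prod {P : Finset ℕ} (hP : ∀ p ∈ P, p.Prime) {φ : ℕ → ℝ}
    (hφ_nonneg : ∀ n, 0 ≤ φ n) (hφ : ∀ n, φ n ≠ 0 → Squarefree n ∧ n.primeFactors ⊆ P)
    (s : Finset ℕ) :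
    ∑ n ∈ s, φ n ≤ ∑ S ∈ P.powerset, φ (∏ p ∈ S, p) := by
  have hinj : Set.InjOn (fun S : Finset ℕ => ∏ p ∈ S, p) P.powerset :=
    Nat.prod_primeFactors_invOn_squarefree.1.injOn.mono fun S hS p hp =>
      hP p (mem_powerset.1 hS hp)
  rw [← sum_filter_ne_zero, ← sum_image hinj]
  refine sum_le_sum_of_subset_of_nonneg (fun n hn => ?_) fun n _ _ => hφ_nonneg n
  obtain ⟨hsq, hsub⟩ := hφ n (mem_filter.1 hn).2
  exact mem_image.2
    ⟨n.primeFactors, mem_powerset.2 hsub, Nat.prod_primeFactors_of_squarefree hsq⟩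

theorem sqfProd_prod_mul_log_div_sqrt {S U : Finset ℕ} (hS : ∀ p ∈ S, p.Prime)
    (hU : ∀ p ∈ U, p.Prime) (hSU : Disjoint S U) :
    sqfProd a (∏ p ∈ U, p) * sqfProd a ((∏ p ∈ S, p) * ∏ p ∈ U, p) *
        log (∏ p ∈ S, p : ℕ) / √(∏ p ∈ S, p : ℕ) =
      (∏ p ∈ U, a p ^ 2) * ((∑ p ∈ S, log p) * ∏ p ∈ S, a p / √p) := by
  have hSU' : ∀ p ∈ S ∪ U, p.Prime := fun p hp => (mem_union.1 hp).elim (hS p) (hU p)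
  rw [← prod_union hSU, sqfProd_prod_primes hU, sqfProd_prod_primes hSU', prod_union hSU,
    Nat.cast_prod, log_prod fun p hp => by exact_mod_cast (hS p hp).ne_zero,
    sqrt_prod _ fun p _ => p.cast_nonneg, prod_div_distrib]
  simp only [sq, prod_mul_distrib]
  ring

theorem sum_sqfProd_mul_log_div_sqrt_le (ha : ∀ p, 0 ≤ a p) {P : Finset ℕ}
    (hP : ∀ p ∈ P, p.Prime) (ha_supp : ∀ p, p.Prime → a p ≠ 0 → p ∈ P)
    (s : Finset ℕ) (t : ℕ → Finset ℕ) :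
    ∑ n ∈ s, ∑ u ∈ t n, sqfProd a u * sqfProd a (n * u) * log n / √n ≤
      (∑ p ∈ P, log p * (a p / √p)) * ∏ p ∈ P, (1 + a p ^ 2 + a p / √p) := by
  set term : ℕ → ℕ → ℝ := fun n u => sqfProd a u * sqfProd a (n * u) * log n / √n
  have hterm_nonneg : ∀ n u, 0 ≤ term n u := sqfProd_mul_sqfProd_mul_log_div_sqrt_nonneg ha
  have hterm_ne_zero : ∀ n u, term n u ≠ 0 →
      Squarefree (n * u) ∧ (n * u).primeFactors ⊆ P := fun n u h =>
    squarefree_and_primeFactors_subset_of_sqfProd_ne_zero ha_supp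
      fun h0 => h (by simp only [term, h0, mul_zero, zero_mul, zero_div])
  have hinner : ∀ n, ∑ u ∈ t n, term n u ≤
      ∑ U ∈ (P \ n.primeFactors).powerset, term n (∏ p ∈ U, p) := fun n =>
    sum_le_sum_powerset_prod (fun p hp => hP p (mem_sdiff.1 hp).1) (hterm_nonneg n)
      (fun u hu => by
        obtain ⟨hsq, hsub⟩ := hterm_ne_zero n u hu
        obtain ⟨hcop, -, hu_sq⟩ := Nat.squarefree_mul_iff.1 hsq
        refine ⟨hu_sq, fun p hp => mem_sdiff.2 ⟨hsub ?_, ?_⟩⟩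
        · exact Nat.primeFactors_mono (dvd_mul_left u n) hsq.ne_zero hp
        · exact disjoint_right.1 hcop.disjoint_primeFactors hp) _
  have houter : ∑ n ∈ s, ∑ U ∈ (P \ n.primeFactors).powerset, term n (∏ p ∈ U, p) ≤
      ∑ S ∈ P.powerset, ∑ U ∈ (P \ S).powerset, term (∏ p ∈ S, p) (∏ p ∈ U, p) := by
    refine (sum_le_sum_powerset_prod hP (fun n => sum_nonneg fun U _ => hterm_nonneg _ _)
      (fun n hn => ?_) s).trans_eq (sum_congr rfl fun S hS => ?_)
    · obtain ⟨U, -, hU⟩ := exists_ne_zero_of_sum_ne_zero hn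
      obtain ⟨hsq, hsub⟩ := hterm_ne_zero _ _ hU
      exact ⟨hsq.of_mul_left,
        (Nat.primeFactors_mono (dvd_mul_right n _) hsq.ne_zero).trans hsub⟩
    · rw [Nat.primeFactors_prod fun p hp => hP p (mem_powerset.1 hS hp)]
  have hevaluate : ∀ S ∈ P.powerset, ∑ U ∈ (P \ S).powerset, term (∏ p ∈ S, p) (∏ p ∈ U, p) =
      (∑ p ∈ S, log p) * ((∏ p ∈ S, a p / √p) * ∏ p ∈ P \ S, (1 + a p ^ 2)) := by
    intro S hS
    have hS' : ∀ p ∈ S, p.Prime := fun p hp => hP p (mem_powerset.1 hS hp)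
    rw [sum_congr rfl fun U hU => sqfProd_prod_mul_log_div_sqrt hS'
      (fun p hp => hP p (mem_sdiff.1 (mem_powerset.1 hU hp)).1)
      (disjoint_of_subset_right (mem_powerset.1 hU) disjoint_sdiff), ← sum_mul, ← prod_one_add]
    ring
  calc ∑ n ∈ s, ∑ u ∈ t n, term n u
      ≤ ∑ S ∈ P.powerset, ∑ U ∈ (P \ S).powerset, term (∏ p ∈ S, p) (∏ p ∈ U, p) :=
        (sum_le_sum fun n _ => hinner n).trans houter
    _ = ∑ p ∈ P, log p * (a p / √p) * ∏ q ∈ P.erase p, (a q / √q + (1 + a q ^ 2)) := by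
        rw [sum_congr rfl hevaluate, sum_powerset_sum_mul_prod_mul_prod_sdiff]
    _ ≤ ∑ p ∈ P, log p * (a p / √p) * ∏ q ∈ P, (1 + a q ^ 2 + a q / √q) := by
        have hfactor : ∀ q, 1 ≤ 1 + a q ^ 2 + a q / √q := fun q => by
          have := div_nonneg (ha q) (sqrt_nonneg q)
          nlinarith [sq_nonneg (a q)]
        refine sum_le_sum fun p hp => mul_le_mul_of_nonneg_left ?_ <|
          mul_nonneg (log_natCast_nonneg p) (div_nonneg (ha p) (sqrt_nonneg p))
        simp_rw [add_comm (a _ / √_)]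
        exact prod_le_prod_of_subset_of_one_le (erase_subset p P)
          (fun q _ => zero_le_one.trans (hfactor q)) fun q _ _ => hfactor q
    _ = _ := (sum_mul ..).symm

end SquarefreeProduct

theorem sum_primesBelow_succ_inv_le_one_add_log (K : ℕ) :
    ∑ p ∈ Nat.primesBelow (K + 1), (p : ℝ)⁻¹ ≤ 1 + Real.log K := by
  have hsub : Nat.primesBelow (K + 1) ⊆ Icc 1 K := fun p hp => by
    obtain ⟨hlt, hp⟩ := Nat.mem_primesBelow.1 hp
    exact mem_Icc.2 ⟨hp.one_le, Nat.lt_succ_iff.1 hlt⟩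
  calc ∑ p ∈ Nat.primesBelow (K + 1), (p : ℝ)⁻¹
      ≤ ∑ d ∈ Icc 1 K, (d : ℝ)⁻¹ :=
        sum_le_sum_of_subset_of_nonneg hsub fun _ _ _ => by positivity
    _ = harmonic K := by rw [harmonic_eq_sum_Icc]; push_cast; rfl
    _ ≤ 1 + Real.log K := harmonic_le_one_add_log K

section Resonator

open Real

theorem resF_eq_sqfProd (M : ℕ) : resF M = sqfProd (resFp M) := rfl

theorem resFp_nonneg (M p : ℕ) : 0 ≤ resFp M p := by
  unfold resFp
  split_ifs
  exacts [div_nonneg (sqrt_nonneg _) (mul_nonneg (sqrt_nonneg _) (log_natCast_nonneg p)), le_rfl]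

theorem log_mul_resFp_div_sqrt_le (M p : ℕ) : log p * (resFp M p / √p) ≤ resL M / p := by
  have hL : 0 ≤ resL M := sqrt_nonneg _
  unfold resFp
  split_ifs
  · rcases eq_or_ne (log p) 0 with hlog | hlog
    · rw [hlog, zero_mul]
      positivity
    · have hp : 0 < (p : ℝ) := p.cast_nonneg.lt_of_ne' fun h => hlog (by rw [h, log_zero])
      have hsqrt : 0 < √(p : ℝ) := sqrt_pos.2 hp
      refine le_of_eq ?_
      calc log p * (resL M / (√p * log p) / √p) = resL M / (√p * √p) := by field_simp
        _ = resL M / p := by rw [mul_self_sqrt hp.le]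
  · rw [zero_div, mul_zero]
    positivity

noncomputable def resP (M : ℕ) : Finset ℕ :=
  Nat.primesBelow (⌊exp (log (resL M) ^ 2)⌋₊ + 1)

theorem mem_resP_of_resFp_ne_zero {M p : ℕ} (hp : p.Prime) (h : resFp M p ≠ 0) :
    p ∈ resP M := by
  refine Nat.mem_primesBelow.2 ⟨Nat.lt_succ_iff.2 (Nat.le_floor ?_), hp⟩
  by_contra hlt
  exact h (if_neg fun hcond => hlt hcond.2)

theorem resQ1_eq_prod_resP (M : ℕ) :
    resQ1 M = ∏ p ∈ resP M, (1 + resFp M p ^ 2 + resFp M p / √p) := by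
  refine finprod_mem_eq_prod_of_subset _ (fun p ⟨hp, hne⟩ => mem_resP_of_resFp_ne_zero hp ?_)
    fun p hp => (Nat.mem_primesBelow.1 hp).2
  rintro h0
  exact hne (by simp [h0])

theorem sum_resP_log_mul_resFp_div_sqrt_le (M : ℕ) :
    ∑ p ∈ resP M, log p * (resFp M p / √p) ≤ resL M * (1 + log (resL M) ^ 2) := by
  set K := ⌊exp (log (resL M) ^ 2)⌋₊
  have hlogK : log K ≤ log (resL M) ^ 2 := by
    rcases Nat.eq_zero_or_pos K with hK | hK
    · rw [hK, Nat.cast_zero, log_zero]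
      positivity
    · exact (log_le_iff_le_exp (by exact_mod_cast hK)).2 (Nat.floor_le (exp_pos _).le)
  calc ∑ p ∈ resP M, log p * (resFp M p / √p)
      ≤ ∑ p ∈ resP M, resL M * (p : ℝ)⁻¹ :=
        sum_le_sum fun p _ => (log_mul_resFp_div_sqrt_le M p).trans_eq (div_eq_mul_inv _ _)
    _ ≤ resL M * (1 + log K) := by
        rw [← mul_sum]
        exact mul_le_mul_of_nonneg_left (sum_primesBelow_succ_inv_le_one_add_log K)
          (sqrt_nonneg _)
    _ ≤ resL M * (1 + log (resL M) ^ 2) := by gcongr; exact sqrt_nonneg _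

theorem norm_resonator_sum_le (M : ℕ) :
    ‖∑ n ∈ Icc 1 M, ∑ u ∈ Icc 1 (M / n), resF M u * resF M (n * u) * log n / √n‖ ≤
      resQ1 M * (resL M * (1 + log (resL M) ^ 2)) := by
  rw [resF_eq_sqfProd, norm_of_nonneg (sum_nonneg fun n _ => sum_nonneg fun u _ =>
    sqfProd_mul_sqfProd_mul_log_div_sqrt_nonneg (resFp_nonneg M) n u),
    resQ1_eq_prod_resP, mul_comm (∏ _ ∈ _, _)]
  refine (sum_sqfProd_mul_log_div_sqrt_le (resFp_nonneg M)
    (fun p hp => (Nat.mem_primesBelow.1 hp).2) (fun p => mem_resP_of_resFp_ne_zero) _ _).trans ?_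
  refine mul_le_mul_of_nonneg_right (sum_resP_log_mul_resFp_div_sqrt_le M)
    (prod_nonneg fun p _ => ?_)
  have := resFp_nonneg M p
  positivity

end Resonator

section Asymptotics

open Real Asymptotics

theorem sqrt_mul_log_mul_one_add_log_sq_le {x : ℝ} (hx : exp 1 ≤ x) :
    √(x * log x) * (1 + log √(x * log x) ^ 2) ≤ 2 * (√x * log x ^ 3) := by
  have hx0 : 0 < x := (exp_pos 1).trans_le hx
  have hl : 1 ≤ log x := (le_log_iff_exp_le hx0).2 hx
  have hlx : log x ≤ x := log_le_self hx0.le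
  set L := √(x * log x)
  have hL1 : 1 ≤ L := one_le_sqrt.2 (by nlinarith)
  have hL_le : L ≤ √x * log x :=
    sqrt_le_iff.2 ⟨by positivity, by
      rw [mul_pow, sq_sqrt hx0.le]
      nlinarith [mul_nonneg hx0.le (mul_nonneg (zero_le_one.trans hl) (sub_nonneg.2 hl))]⟩
  have hlogL : log L ≤ log x := log_le_log (by positivity) <|
    sqrt_le_iff.2 ⟨hx0.le, by nlinarith⟩
  have hlogL0 : 0 ≤ log L := log_nonneg hL1
  calc L * (1 + log L ^ 2) ≤ (√x * log x) * (1 + log x ^ 2) := by gcongr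
    _ ≤ 2 * (√x * log x ^ 3) := by
        have := sqrt_nonneg x
        have hl2 : 0 ≤ log x ^ 2 - 1 := by nlinarith
        nlinarith [mul_nonneg this (mul_nonneg (zero_le_one.trans hl) hl2)]

theorem isBigO_sqrt_mul_log_mul_one_add_log_sq {ε : ℝ} (hε : 0 < ε) :
    (fun x : ℝ => √(x * log x) * (1 + log √(x * log x) ^ 2)) =O[atTop]
      fun x => x ^ ((1 : ℝ) / 2 + ε) := by
  have hlog : (fun x : ℝ => log x ^ 3) =o[atTop] fun x => x ^ ε := by
    simpa only [rpow_ofNat] using isLittleO_log_rpow_rpow_atTop 3 hε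
  have hbound : (fun x : ℝ => √(x * log x) * (1 + log √(x * log x) ^ 2)) =O[atTop]
      fun x => √x * log x ^ 3 := by
    refine IsBigO.of_bound 2 ((eventually_ge_atTop (exp 1)).mono fun x hx => ?_)
    have hx0 : 0 < x := (exp_pos 1).trans_le hx
    have hl : 0 ≤ log x := log_nonneg ((one_le_exp zero_le_one).trans hx)
    rw [norm_of_nonneg (by positivity), norm_of_nonneg (by positivity)]
    exact sqrt_mul_log_mul_one_add_log_sq_le hx
  refine hbound.trans (((isBigO_refl (fun x : ℝ => √x) atTop).mul hlog.isBigO).trans_eventuallyEq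
    ((eventually_gt_atTop 0).mono fun x hx => ?_))
  simp only [sqrt_eq_rpow, ← rpow_add hx]

end Asymptotics

/-- With the resonator coefficients `f = f_M` as defined, for every `ε > 0`
one has `Σ_{nu ≤ M} f(u) f(nu) (log n)/√n ≪_ε Q₁ (log M)^{1/2+ε}` as `M → ∞`. -/
theorem resonator_log_weighted_sum (ε : ℝ) (hε : 0 < ε) :
    (fun M : ℕ =>
        ∑ n ∈ Finset.Icc 1 M, ∑ u ∈ Finset.Icc 1 (M / n),
          resF M u * resF M (n * u) * Real.log n / Real.sqrt n)
      =O[atTop] fun M : ℕ => resQ1 M * Real.log M ^ ((1 : ℝ) / 2 + ε) := by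
  have hL : (fun M : ℕ => resL M * (1 + Real.log (resL M) ^ 2)) =O[atTop]
      fun M : ℕ => Real.log M ^ ((1 : ℝ) / 2 + ε) :=
    (isBigO_sqrt_mul_log_mul_one_add_log_sq hε).comp_tendsto
      (Real.tendsto_log_atTop.comp tendsto_natCast_atTop_atTop)
  exact (Asymptotics.isBigO_of_le _ fun M =>
    (norm_resonator_sum_le M).trans (Real.le_norm_self _)).trans
      ((Asymptotics.isBigO_refl resQ1 _).mul hL)
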